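/- The supremum over θ ∈ ℝ of |(1+cos 2θ+2cos θ)/4| + |(1+cos 2θ-2cos θ)/4| + 2·|(1-cos 2θ)/4| equals 5/4, attained at θ = ±π/3 and θ = ±2π/3. -/
import Mathlib


/-- The nonconvexity factor for the even-distribution 2-fold channel. -/
noncomputable def phi (θ : ℝ) : ℝ :=
  |(1 + Real.cos (2 * θ) + 2 * Real.cos θ) / 4|
  + |(1 + Real.cos (2 * θ) - 2 * Real.cos θ) / 4|
  + 2 * |(1 - Real.cos (2 * θ)) / 4|

lemma phi_eq (θ : ℝ) : phi θ = |Real.cos θ| + 1 - Real.cos θ ^ 2 := by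
  unfold phi
  rw [Real.cos_two_mul]
  set c := Real.cos θ with hc
  have h1 : -1 ≤ c := Real.neg_one_le_cos θ
  have h2 : c ≤ 1 := Real.cos_le_one θ
  rcases le_or_gt 0 c with h | h
  · rw [abs_of_nonneg h, abs_of_nonneg (by nlinarith : (0:ℝ) ≤ (1 + (2 * c ^ 2 - 1) + 2 * c) / 4),
      abs_of_nonpos (by nlinarith : (1 + (2 * c ^ 2 - 1) - 2 * c) / 4 ≤ 0),
      abs_of_nonneg (by nlinarith : (0:ℝ) ≤ (1 - (2 * c ^ 2 - 1)) / 4)]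
    ring
  · rw [abs_of_neg h, abs_of_nonpos (by nlinarith : (1 + (2 * c ^ 2 - 1) + 2 * c) / 4 ≤ 0),
      abs_of_nonneg (by nlinarith : (0:ℝ) ≤ (1 + (2 * c ^ 2 - 1) - 2 * c) / 4),
      abs_of_nonneg (by nlinarith : (0:ℝ) ≤ (1 - (2 * c ^ 2 - 1)) / 4)]
    ring

lemma phi_val {θ : ℝ} (h : Real.cos θ = 1/2 ∨ Real.cos θ = -(1/2)) : phi θ = 5 / 4 := by
  rw [phi_eq]
  rcases h with h | h <;> rw [h]
  · rw [abs_of_nonneg (by norm_num)]; norm_num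
  · rw [abs_neg, abs_of_nonneg (by norm_num)]; norm_num

/-- `sup_θ φ(θ) = 5/4`, attained at `θ = ±π/3` and `θ = ±2π/3`. -/
theorem stmt15 :
    IsGreatest (Set.range phi) (5 / 4) ∧
    phi (Real.pi / 3) = 5 / 4 ∧ phi (-(Real.pi / 3)) = 5 / 4 ∧
    phi (2 * Real.pi / 3) = 5 / 4 ∧ phi (-(2 * Real.pi / 3)) = 5 / 4 := by
  have hp3 : Real.cos (Real.pi / 3) = 1/2 := Real.cos_pi_div_three
  have h2p3 : Real.cos (2 * Real.pi / 3) = -(1/2) := by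
    have : (2 : ℝ) * Real.pi / 3 = Real.pi - Real.pi / 3 := by ring
    rw [this, Real.cos_pi_sub, hp3]
  refine ⟨⟨⟨Real.pi / 3, phi_val (Or.inl hp3)⟩, ?_⟩, phi_val (Or.inl hp3),
    phi_val (Or.inl (by rwa [Real.cos_neg])),
    phi_val (Or.inr h2p3), phi_val (Or.inr (by rwa [Real.cos_neg]))⟩
  rintro x ⟨θ, rfl⟩
  rw [phi_eq]
  have h1 : |Real.cos θ| ≤ 1 := Real.abs_cos_le_one θ
  have h0 : 0 ≤ |Real.cos θ| := abs_nonneg _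
  have : Real.cos θ ^ 2 = |Real.cos θ| ^ 2 := (sq_abs _).symm
  nlinarith [sq_nonneg (|Real.cos θ| - 1/2)]
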